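/- Let K be a convex body in ℝⁿ with 0 in its interior and let f : K° → ℝ be a strictly positive integrable function. Then there exists t₀ > 0 such that for all 0 ≤ t ≤ t₀ the mean width body K_f[t] is bounded. -/

import Mathlib

/-!
Since `x ∈ K_x`, the set `K° \ K_x°` contains the cap `K° ∩ {⟪x, ·⟫ > 1}`, so `w_f(x)` is at least
`2 / ω(S^{n-1})` times the integral of `f` over that cap. If `K ⊆ B(0, R)` then `B(0, 1/R) ⊆ K°`,
so the cap integral is positive once `‖x‖ > R`. It is continuous in `x ≠ 0` (hyperplanes are null)
and grows along rays, so by compactness of a sphere it is bounded below by some `c > 0` outside a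
ball, and `K_f[t]` lies in that ball for `t < 2c / ω(S^{n-1})`.

That constant is positive because `0 < ω(S^{n-1}) < ∞`: a coordinate projection maps the sphere
onto the open unit ball of `ℝ^{n-1}` and is `1`-Lipschitz, and the sphere is covered by the radial
projections of the `2n` facets of the cube `[-1, 1]^n`, which are Lipschitz images of bounded sets.
-/

open MeasureTheory Metric Set
open scoped RealInnerProductSpace

noncomputable section

abbrev Euc (n : ℕ) := EuclideanSpace ℝ (Fin n)

/-- The polar body `K° = {y : ⟨x,y⟩ ≤ 1 for all x ∈ K}`. -/
def polarBody {n : ℕ} (K : Set (Euc n)) : Set (Euc n) := {y | ∀ x ∈ K, ⟪x, y⟫ ≤ 1}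

/-- The support function `h_K(u) = sup_{x ∈ K} ⟨x,u⟫`. -/
def suppFn {n : ℕ} (K : Set (Euc n)) (u : Euc n) : ℝ := sSup ((fun x => ⟪x, u⟫) '' K)

/-- Surface area `ω(S^{n-1})` of the unit sphere, as the `(n-1)`-dimensional
Hausdorff measure of the sphere. -/
def sphereArea (n : ℕ) : ℝ := (μH[(n : ℝ) - 1] (sphere (0 : Euc n) 1)).toReal

/-- `K_x = conv({x} ∪ K)`, the convex hull of `x` and `K`. -/
def hullWith {n : ℕ} (K : Set (Euc n)) (x : Euc n) : Set (Euc n) :=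
  convexHull ℝ ({x} ∪ K)

/-- `w_f(x) = (2/ω(S^{n-1})) ∫_{K° \ K_x°} f dξ`. -/
def wf {n : ℕ} (K : Set (Euc n)) (f : Euc n → ℝ) (x : Euc n) : ℝ :=
  (2 / sphereArea n) * ∫ ξ in polarBody K \ polarBody (hullWith K x), f ξ

/-- The mean width body `K_f[t] = {x : w_f(x) ≤ t}`. -/
def mwBody {n : ℕ} (K : Set (Euc n)) (f : Euc n → ℝ) (t : ℝ) : Set (Euc n) :=
  {x | wf K f x ≤ t}

lemma lipschitzOnWith_inv_norm_smul {E : Type*} [NormedAddCommGroup E] [NormedSpace ℝ E] :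
    LipschitzOnWith 2 (fun x : E => ‖x‖⁻¹ • x) {x | 1 ≤ ‖x‖} := by
  refine LipschitzOnWith.of_dist_le_mul fun x (hx : 1 ≤ ‖x‖) y (hy : 1 ≤ ‖y‖) => ?_
  have hx₀ : 0 < ‖x‖ := one_pos.trans_le hx
  have hy₀ : 0 < ‖y‖ := one_pos.trans_le hy
  have hsplit : ‖x‖⁻¹ • x - ‖y‖⁻¹ • y = ‖x‖⁻¹ • (x - y) + ((‖y‖ - ‖x‖) / (‖x‖ * ‖y‖)) • y := by
    have hc : ‖y‖⁻¹ = ‖x‖⁻¹ - (‖y‖ - ‖x‖) / (‖x‖ * ‖y‖) := by field_simp; ring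
    rw [hc]
    module
  rw [dist_eq_norm, dist_eq_norm, hsplit, NNReal.coe_two]
  calc ‖‖x‖⁻¹ • (x - y) + ((‖y‖ - ‖x‖) / (‖x‖ * ‖y‖)) • y‖
      ≤ ‖x‖⁻¹ * ‖x - y‖ + |‖y‖ - ‖x‖| / ‖x‖ := by
        refine (norm_add_le _ _).trans_eq ?_
        rw [norm_smul, norm_smul, Real.norm_eq_abs, Real.norm_eq_abs, abs_inv, abs_norm,
          abs_div, abs_of_pos (mul_pos hx₀ hy₀)]
        field_simp
    _ ≤ 1 * ‖x - y‖ + ‖x - y‖ / 1 := by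
        gcongr
        · exact inv_le_one_of_one_le₀ hx
        · rw [abs_sub_comm]; exact abs_norm_sub_norm_le x y
    _ = 2 * ‖x - y‖ := by ring

namespace EuclideanSpace

variable {m : ℕ}

def insertCoord (j : Fin (m + 1)) (c : ℝ) (v : Euc m) : Euc (m + 1) :=
  WithLp.toLp 2 (j.insertNth c v)

def removeCoord (j : Fin (m + 1)) (x : Euc (m + 1)) : Euc m :=
  WithLp.toLp 2 (j.removeNth x)

@[simp]
lemma removeCoord_insertCoord (j : Fin (m + 1)) (c : ℝ) (v : Euc m) :
    removeCoord j (insertCoord j c v) = v := by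
  ext i; simp [removeCoord, insertCoord]

@[simp]
lemma insertCoord_removeCoord (j : Fin (m + 1)) (x : Euc (m + 1)) :
    insertCoord j (x j) (removeCoord j x) = x :=
  congrArg (WithLp.toLp 2) (Fin.insertNth_self_removeNth j x)

lemma dist_insertCoord_sq (j : Fin (m + 1)) (a b : ℝ) (v w : Euc m) :
    dist (insertCoord j a v) (insertCoord j b w) ^ 2 = dist a b ^ 2 + dist v w ^ 2 := by
  simp only [EuclideanSpace.dist_eq, Real.sq_sqrt (Finset.sum_nonneg fun _ _ => sq_nonneg _),
    Fin.sum_univ_succAbove _ j, insertCoord, Fin.insertNth_apply_same,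
    Fin.insertNth_apply_succAbove]
  exact Real.sq_sqrt (by positivity)

lemma norm_insertCoord_sq (j : Fin (m + 1)) (c : ℝ) (v : Euc m) :
    ‖insertCoord j c v‖ ^ 2 = c ^ 2 + ‖v‖ ^ 2 := by
  have h0 : insertCoord j 0 (0 : Euc m) = 0 := by ext i; simp [insertCoord]
  simpa [h0] using dist_insertCoord_sq j c 0 v 0

lemma isometry_insertCoord (j : Fin (m + 1)) (c : ℝ) : Isometry (insertCoord j c) :=
  Isometry.of_dist_eq fun v w => by
    have h := dist_insertCoord_sq j c c v w
    rw [dist_self, zero_pow two_ne_zero, zero_add] at h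
    exact (pow_left_inj₀ dist_nonneg dist_nonneg two_ne_zero).mp h

lemma lipschitzWith_removeCoord (j : Fin (m + 1)) : LipschitzWith 1 (removeCoord j) :=
  LipschitzWith.of_dist_le_mul fun x y => by
    have h := dist_insertCoord_sq j (x j) (y j) (removeCoord j x) (removeCoord j y)
    simp only [insertCoord_removeCoord] at h
    rw [NNReal.coe_one, one_mul]
    exact le_of_sq_le_sq (by nlinarith [sq_nonneg (dist (x j) (y j))]) dist_nonneg

lemma ball_subset_removeCoord_image_sphere :
    ball (0 : Euc m) 1 ⊆ removeCoord 0 '' sphere (0 : Euc (m + 1)) 1 := by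
  intro v hv
  have hv' : ‖v‖ ^ 2 ≤ 1 := by
    rw [mem_ball_zero_iff] at hv
    nlinarith [norm_nonneg v]
  refine ⟨insertCoord 0 √(1 - ‖v‖ ^ 2) v, ?_, removeCoord_insertCoord _ _ _⟩
  rw [mem_sphere_zero_iff_norm, ← pow_eq_one_iff_of_nonneg (norm_nonneg _) two_ne_zero,
    norm_insertCoord_sq, Real.sq_sqrt (by linarith)]
  ring

lemma hausdorffMeasure_sphere_pos : 0 < μH[(m : ℝ)] (sphere (0 : Euc (m + 1)) 1) := by
  have hball : 0 < μH[(m : ℝ)] (ball (0 : Euc m) 1) :=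
    isOpen_ball.measure_pos _ (nonempty_ball.2 one_pos)
  calc 0 < μH[(m : ℝ)] (ball (0 : Euc m) 1) := hball
    _ ≤ μH[(m : ℝ)] (removeCoord 0 '' sphere (0 : Euc (m + 1)) 1) :=
        measure_mono ball_subset_removeCoord_image_sphere
    _ ≤ μH[(m : ℝ)] (sphere (0 : Euc (m + 1)) 1) := by
        simpa using (lipschitzWith_removeCoord 0).hausdorffMeasure_image_le (Nat.cast_nonneg m) _

lemma lipschitzWith_inv_norm_smul_insertCoord (j : Fin (m + 1)) {c : ℝ} (hc : 1 ≤ |c|) :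
    LipschitzWith 2 (fun v : Euc m => ‖insertCoord j c v‖⁻¹ • insertCoord j c v) := by
  have hmaps : MapsTo (insertCoord j c) univ {x | 1 ≤ ‖x‖} := fun v _ => by
    show 1 ≤ ‖insertCoord j c v‖
    rw [← abs_norm, ← one_le_sq_iff_one_le_abs, norm_insertCoord_sq]
    nlinarith [(one_le_sq_iff_one_le_abs c).mpr hc, sq_nonneg ‖v‖]
  simpa [Function.comp_def] using lipschitzOnWith_univ.mp
    (lipschitzOnWith_inv_norm_smul.comp (isometry_insertCoord j c).lipschitz.lipschitzOnWith hmaps)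

lemma sphere_subset_biUnion_image_cube :
    sphere (0 : Euc (m + 1)) 1 ⊆
      ⋃ p ∈ (univ ×ˢ {-1, 1} : Set (Fin (m + 1) × ℝ)),
        (fun v => ‖insertCoord p.1 p.2 v‖⁻¹ • insertCoord p.1 p.2 v) '' {v | ∀ i, |v i| ≤ 1} := by
  intro u hu
  rw [mem_sphere_zero_iff_norm] at hu
  obtain ⟨j, hj⟩ := Finite.exists_max fun i => |u i|
  have huj : 0 < |u j| := by
    by_contra! h
    have : u = 0 := by ext i; exact abs_nonpos_iff.mp ((hj i).trans h)
    simp [this] at hu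
  set x := |u j|⁻¹ • u with hx
  have hxi : ∀ i, |x i| = |u i| / |u j| := fun i => by
    simp [hx, abs_mul, abs_inv, div_eq_inv_mul]
  have hxj : x j ∈ ({-1, 1} : Set ℝ) := by
    have : |x j| = 1 := by rw [hxi, div_self huj.ne']
    rcases abs_eq zero_le_one |>.mp this with h | h <;> simp [h]
  refine mem_iUnion₂.mpr ⟨(j, x j), ⟨mem_univ _, hxj⟩, removeCoord j x, fun i => ?_, ?_⟩
  · rw [show (removeCoord j x) i = x (j.succAbove i) from rfl, hxi]
    exact div_le_one_of_le₀ (hj _) (abs_nonneg _)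
  · have hnx : ‖x‖ = |u j|⁻¹ := by
      rw [hx, norm_smul, norm_inv, Real.norm_eq_abs, abs_abs, hu, mul_one]
    dsimp only
    rw [insertCoord_removeCoord, hnx, inv_inv, hx, smul_smul, mul_inv_cancel₀ huj.ne', one_smul]

lemma isBounded_cube : Bornology.IsBounded {v : Euc m | ∀ i, |v i| ≤ 1} := by
  refine (Metric.isBounded_iff_subset_closedBall 0).mpr ⟨√m, fun v hv => ?_⟩
  rw [mem_closedBall_zero_iff, EuclideanSpace.norm_eq]
  refine Real.sqrt_le_sqrt ?_
  calc ∑ i, ‖v i‖ ^ 2 ≤ ∑ _i : Fin m, (1 : ℝ) :=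
        Finset.sum_le_sum fun i _ => (sq_le_one_iff_abs_le_one _).mpr (by simpa using hv i)
    _ = m := by simp

lemma hausdorffMeasure_sphere_lt_top : μH[(m : ℝ)] (sphere (0 : Euc (m + 1)) 1) < ⊤ := by
  refine (measure_mono sphere_subset_biUnion_image_cube).trans_lt
    (measure_biUnion_lt_top (finite_univ.prod (toFinite _)) fun p hp => ?_)
  have hc : 1 ≤ |p.2| := by rcases hp.2 with h | h <;> simp_all
  refine ((lipschitzWith_inv_norm_smul_insertCoord p.1 hc).hausdorffMeasure_image_le
    (Nat.cast_nonneg m) _).trans_lt (ENNReal.mul_lt_top ?_ isBounded_cube.measure_lt_top)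
  exact ENNReal.rpow_lt_top_of_nonneg (Nat.cast_nonneg m) ENNReal.coe_ne_top

end EuclideanSpace

open Filter Topology

section Cap

variable {E : Type*} [NormedAddCommGroup E] [InnerProductSpace ℝ E]

lemma isOpen_one_lt_inner (x : E) : IsOpen {y : E | 1 < ⟪x, y⟫} :=
  isOpen_lt continuous_const (continuous_const.inner continuous_id)

lemma eventually_one_lt_inner_iff {x₀ y : E} (hy : ⟪x₀, y⟫ ≠ 1) :
    ∀ᶠ x in 𝓝 x₀, (1 < ⟪x, y⟫ ↔ 1 < ⟪x₀, y⟫) := by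
  have hc : ContinuousAt (fun x : E => ⟪x, y⟫) x₀ :=
    (continuous_id.inner continuous_const).continuousAt
  rcases hy.lt_or_gt with h | h
  · filter_upwards [hc.eventually_lt continuousAt_const h] with x hx
    exact iff_of_false hx.le.not_gt h.le.not_gt
  · filter_upwards [continuousAt_const.eventually_lt hc h] with x hx
    exact iff_of_true hx h

variable [MeasurableSpace E] [BorelSpace E] {μ : Measure E} {S : Set E} {f : E → ℝ}

lemma measure_inner_eq_null [FiniteDimensional ℝ E] (μ : Measure E) [μ.IsAddHaarMeasure]
    {x : E} (hx : x ≠ 0) (a : ℝ) : μ {y | ⟪x, y⟫ = a} = 0 := by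
  let H : AffineSubspace ℝ E :=
    (AffineSubspace.mk' a ⊥).comap (innerSL ℝ x : E →L[ℝ] ℝ).toLinearMap.toAffineMap
  have hH : (H : Set E) = {y | ⟪x, y⟫ = a} := by
    ext y; simp [H, sub_eq_zero]
  rw [← hH]
  refine Measure.addHaar_affineSubspace μ H fun htop => hx ?_
  have hmem : ∀ y, ⟪x, y⟫ = a := fun y => by
    have : y ∈ H := htop ▸ AffineSubspace.mem_top ℝ E y
    rwa [← SetLike.mem_coe, hH] at this
  rw [← inner_self_eq_zero (𝕜 := ℝ), hmem x, ← hmem 0, inner_zero_right]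

/-- For `S = K°` the cap `S ∩ {y | 1 < ⟪x, y⟫}` is `K° \ K_x°`. -/
def capIntegral (μ : Measure E) (S : Set E) (f : E → ℝ) (x : E) : ℝ :=
  ∫ y in S ∩ {y | 1 < ⟪x, y⟫}, f y ∂μ

lemma continuousAt_capIntegral [FiniteDimensional ℝ E] [μ.IsAddHaarMeasure]
    (hf : IntegrableOn f S μ) {x₀ : E} (hx₀ : x₀ ≠ 0) : ContinuousAt (capIntegral μ S f) x₀ := by
  have hind : capIntegral μ S f = fun x => ∫ y in S, {y | 1 < ⟪x, y⟫}.indicator f y ∂μ := by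
    ext x
    rw [capIntegral, setIntegral_indicator (isOpen_one_lt_inner x).measurableSet]
  rw [hind]
  refine continuousAt_of_dominated (bound := fun y => ‖f y‖)
    (.of_forall fun x => hf.1.indicator (isOpen_one_lt_inner x).measurableSet)
    (.of_forall fun x => ae_of_all _ fun y => norm_indicator_le_norm_self f y) hf.norm ?_
  have hnull : ∀ᵐ y ∂μ.restrict S, ⟪x₀, y⟫ ≠ 1 :=
    ae_restrict_of_ae (measure_eq_zero_iff_ae_notMem.mp (measure_inner_eq_null μ hx₀ 1))
  filter_upwards [hnull] with y hy
  exact (continuousAt_const (y := {y | 1 < ⟪x₀, y⟫}.indicator f y)).congr <|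
    (eventually_one_lt_inner_iff hy).mono fun x hx => by
      simp only [Set.indicator_apply, Set.mem_ofPred_eq, hx]

lemma capIntegral_le_capIntegral_smul (hS : MeasurableSet S) (hf : IntegrableOn f S μ)
    (hf₀ : ∀ y ∈ S, 0 ≤ f y) (x : E) {a : ℝ} (ha : 1 ≤ a) :
    capIntegral μ S f x ≤ capIntegral μ S f (a • x) := by
  refine setIntegral_mono_set (hf.mono_set inter_subset_left)
    (ae_restrict_of_forall_mem (hS.inter (isOpen_one_lt_inner _).measurableSet)
      fun y hy => hf₀ y hy.1) (Eventually.of_forall ?_)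
  rintro y ⟨hyS, hy : 1 < ⟪x, y⟫⟩
  refine ⟨hyS, ?_⟩
  show 1 < ⟪a • x, y⟫
  rw [real_inner_smul_left]
  nlinarith

lemma capIntegral_pos [μ.IsOpenPosMeasure] (hS : MeasurableSet S) {r : ℝ} (hball : ball 0 r ⊆ S)
    (hf : IntegrableOn f S μ) (hf₀ : ∀ y ∈ S, 0 < f y) {x : E} (hx : 1 < r * ‖x‖) :
    0 < capIntegral μ S f x := by
  have hx₀ : 0 < ‖x‖ := norm_pos_iff.mpr (by rintro rfl; simp at hx; linarith)
  have hy : ((1 + r * ‖x‖) / 2 / ‖x‖ ^ 2) • x ∈ ball (0 : E) r ∩ {y | 1 < ⟪x, y⟫} := by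
    refine ⟨?_, ?_⟩
    · rw [mem_ball_zero_iff, norm_smul, Real.norm_of_nonneg (by positivity)]
      field_simp
      linarith
    · show 1 < ⟪x, _⟫
      rw [real_inner_smul_right, real_inner_self_eq_norm_sq, div_mul_cancel₀ _ (by positivity)]
      linarith
  have hcap : MeasurableSet (S ∩ {y | 1 < ⟪x, y⟫}) :=
    hS.inter (isOpen_one_lt_inner x).measurableSet
  rw [capIntegral, setIntegral_pos_iff_support_of_nonneg_ae
    (ae_restrict_of_forall_mem hcap fun y hy => (hf₀ y hy.1).le) (hf.mono_set inter_subset_left)]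
  refine ((isOpen_ball.inter (isOpen_one_lt_inner x)).measure_pos μ ⟨_, hy⟩).trans_le
    (measure_mono fun y hy => ?_)
  exact ⟨(hf₀ y (hball hy.1)).ne', hball hy.1, hy.2⟩

lemma exists_pos_le_capIntegral [FiniteDimensional ℝ E] [Nontrivial E] [μ.IsAddHaarMeasure]
    (hS : MeasurableSet S) {r : ℝ} (hr : 0 < r) (hball : ball 0 r ⊆ S)
    (hf : IntegrableOn f S μ) (hf₀ : ∀ y ∈ S, 0 < f y) :
    ∃ c > 0, ∀ x : E, 2 / r ≤ ‖x‖ → c ≤ capIntegral μ S f x := by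
  set R := 2 / r
  have hR : 0 < R := by positivity
  obtain ⟨x₀, hx₀, hmin⟩ := (isCompact_sphere (0 : E) R).exists_isMinOn
    (NormedSpace.sphere_nonempty.mpr hR.le) fun x hx =>
      (continuousAt_capIntegral hf (ne_of_mem_sphere hx hR.ne')).continuousWithinAt
  refine ⟨capIntegral μ S f x₀, capIntegral_pos hS hball hf hf₀ ?_, fun x hx => ?_⟩
  · rw [mem_sphere_zero_iff_norm.mp hx₀, mul_div_cancel₀ _ hr.ne']
    norm_num
  have hx₀ : 0 < ‖x‖ := hR.trans_le hx
  have hsph : (R / ‖x‖) • x ∈ sphere (0 : E) R := by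
    rw [mem_sphere_zero_iff_norm, norm_smul, Real.norm_of_nonneg (by positivity),
      div_mul_cancel₀ _ hx₀.ne']
  calc capIntegral μ S f x₀ ≤ capIntegral μ S f ((R / ‖x‖) • x) := hmin hsph
    _ ≤ capIntegral μ S f ((‖x‖ / R) • (R / ‖x‖) • x) :=
        capIntegral_le_capIntegral_smul hS hf (fun y hy => (hf₀ y hy).le) _
          ((one_le_div hR).mpr hx)
    _ = capIntegral μ S f x := by
        rw [smul_smul, div_mul_div_cancel₀ hR.ne', div_self hx₀.ne', one_smul]

end Cap

lemma sphereArea_pos {n : ℕ} (hn : 0 < n) : 0 < sphereArea n := by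
  obtain ⟨m, rfl⟩ := Nat.exists_eq_add_of_lt hn
  rw [sphereArea, zero_add, Nat.cast_succ, add_sub_cancel_right]
  exact ENNReal.toReal_pos EuclideanSpace.hausdorffMeasure_sphere_pos.ne'
    EuclideanSpace.hausdorffMeasure_sphere_lt_top.ne

section Polar

variable {n : ℕ} {K : Set (Euc n)}

lemma isClosed_polarBody (K : Set (Euc n)) : IsClosed (polarBody K) := by
  simp only [polarBody, ofPred_forall]
  exact isClosed_biInter fun x _ => isClosed_le (continuous_const.inner continuous_id)
    continuous_const

lemma ball_inv_subset_polarBody {R : ℝ} (hR : 0 < R) (hK : K ⊆ closedBall 0 R) :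
    ball 0 R⁻¹ ⊆ polarBody K := fun y hy x hx => by
  have hx' : ‖x‖ ≤ R := mem_closedBall_zero_iff.mp (hK hx)
  have hy' : ‖y‖ < R⁻¹ := mem_ball_zero_iff.mp hy
  calc ⟪x, y⟫ ≤ ‖x‖ * ‖y‖ := real_inner_le_norm x y
    _ ≤ R * R⁻¹ := by gcongr
    _ = 1 := mul_inv_cancel₀ hR.ne'

lemma polarBody_inter_subset_diff (x : Euc n) :
    polarBody K ∩ {y | 1 < ⟪x, y⟫} ⊆ polarBody K \ polarBody (hullWith K x) :=
  fun _ ⟨hyK, hy⟩ => ⟨hyK, fun hyx =>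
    (hyx x (subset_convexHull ℝ _ (mem_union_left _ rfl))).not_gt hy⟩

lemma mul_capIntegral_le_wf {f : Euc n → ℝ} (hf : IntegrableOn f (polarBody K))
    (hf₀ : ∀ ξ ∈ polarBody K, 0 ≤ f ξ) (x : Euc n) :
    2 / sphereArea n * capIntegral volume (polarBody K) f x ≤ wf K f x := by
  refine mul_le_mul_of_nonneg_left ?_ (div_nonneg zero_le_two ENNReal.toReal_nonneg)
  exact setIntegral_mono_set (hf.mono_set sdiff_subset)
    (ae_restrict_of_forall_mem
      ((isClosed_polarBody K).measurableSet.diff (isClosed_polarBody _).measurableSet)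
      fun y hy => hf₀ y hy.1)
    (polarBody_inter_subset_diff x).eventuallyLE

end Polar

theorem stmt7_general (n : ℕ) (hn : 1 ≤ n) (K : Set (Euc n))
    (hKcpt : IsCompact K)
    (f : Euc n → ℝ)
    (hfpos : ∀ ξ ∈ polarBody K, 0 < f ξ)
    (hfint : IntegrableOn f (polarBody K)) :
    ∃ t₀ : ℝ, 0 < t₀ ∧ ∀ t : ℝ, 0 ≤ t → t ≤ t₀ →
      Bornology.IsBounded (mwBody K f t) := by
  obtain ⟨R, hR, hKR⟩ := hKcpt.isBounded.subset_closedBall_lt 0 0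
  have : NeZero n := ⟨by omega⟩
  obtain ⟨c, hc, hcap⟩ := exists_pos_le_capIntegral (μ := volume)
    (isClosed_polarBody K).measurableSet (inv_pos.mpr hR) (ball_inv_subset_polarBody hR hKR)
    hfint hfpos
  have hA : 0 < 2 / sphereArea n := div_pos two_pos (sphereArea_pos hn)
  refine ⟨2 / sphereArea n * c / 2, by positivity, fun t _ ht => ?_⟩
  refine (isBounded_closedBall (x := 0) (r := 2 / R⁻¹)).subset fun x (hx : wf K f x ≤ t) => ?_
  rw [mem_closedBall_zero_iff]
  by_contra! hfar
  have hwf : 2 / sphereArea n * c ≤ wf K f x :=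
    (mul_le_mul_of_nonneg_left (hcap x hfar.le) hA.le).trans
      (mul_capIntegral_le_wf hfint (fun ξ hξ => (hfpos ξ hξ).le) x)
  nlinarith

theorem stmt7 (n : ℕ) (hn : 1 ≤ n) (K : Set (Euc n))
    (hKcpt : IsCompact K) (hKconv : Convex ℝ K) (h0K : (0 : Euc n) ∈ interior K)
    (f : Euc n → ℝ)
    (hfpos : ∀ ξ ∈ polarBody K, 0 < f ξ)
    (hfint : IntegrableOn f (polarBody K)) :
    ∃ t₀ : ℝ, 0 < t₀ ∧ ∀ t : ℝ, 0 ≤ t → t ≤ t₀ →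
      Bornology.IsBounded (mwBody K f t) :=
  stmt7_general n hn K hKcpt f hfpos hfint
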